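/- For all integers m, n ≥ 1 and k ≥ 0, one has [z_{m,n}, x^{2^k}] = z_{m+2^k,n} · z_{m,n+2^k} · z_{m+2^k,n+2^k}. (Lemma 2.1 of the paper, stated under the relations satisfied by the pro-2 group 𝔊(2).) -/

import Mathlib

namespace Paper

variable {G : Type*} [Group G]

/-- The paper's commutator `[a,b] = a⁻¹ b⁻¹ a b`. -/
def pc {G : Type*} [Group G] (a b : G) : G := a⁻¹ * b⁻¹ * a * b

/-- The left-normed iterated commutator `[a, x, (r)…, x]`. -/
def itc {G : Type*} [Group G] (x a : G) : ℕ → G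
  | 0 => a
  | r + 1 => pc (itc x a r) x

/-- `c_i`, where `c_1 = y` and `c_{i+1} = [c_i, x]`; equivalently `c_i = [y, x, (i-1)…, x]`. -/
def cc (x y : G) (i : ℕ) : G := itc x y (i - 1)

/-- `z_{m,n} = [c_m, c_n]`. -/
def zz (x y : G) (m n : ℕ) : G := pc (cc x y m) (cc x y n)

/-- `H = ⟨c_i : i ≥ 1⟩`. -/
def Hsub (x y : G) : Subgroup G :=
  Subgroup.closure {g | ∃ i, 1 ≤ i ∧ g = cc x y i}

/-- `Z = ⟨c_l², z_{m,n} : l, m, n ≥ 1⟩`. -/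
def Zsub (x y : G) : Subgroup G :=
  Subgroup.closure ({g | ∃ l, 1 ≤ l ∧ g = cc x y l ^ 2} ∪
    {g | ∃ m n, 1 ≤ m ∧ 1 ≤ n ∧ g = zz x y m n})

/-- `w_{i,j,k} = ∏_{t=1}^{2^k−1} [z_{i+t,j+t−1}, x, (2^k−1−t)…, x]`,
factors in order of increasing `t` (reindexed by `t ↦ t+1`). -/
def ww (x y : G) (i j k : ℕ) : G :=
  ((List.range (2 ^ k - 1)).map
    (fun t => itc x (zz x y (i + t + 1) (j + t)) (2 ^ k - 2 - t))).prod

/-- `L_k`, the normal closure of `{w_{i,j,k} : i,j ≥ 1} ∪ {z_{m,n} : m ≥ 2^k, n ≥ 1}`. -/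
def Lsub (x y : G) (k : ℕ) : Subgroup G :=
  Subgroup.normalClosure ({g | ∃ i j, 1 ≤ i ∧ 1 ≤ j ∧ g = ww x y i j k} ∪
    {g | ∃ m n, 2 ^ k ≤ m ∧ 1 ≤ n ∧ g = zz x y m n})

/-- `Q_k = ⟨c_l² : l ≥ 2^{k−1}⟩`. -/
def Qsub (x y : G) (k : ℕ) : Subgroup G :=
  Subgroup.closure {g | ∃ l, 2 ^ (k - 1) ≤ l ∧ g = cc x y l ^ 2}

/-- `d_k(h) = [h,x,(2^k−1)…,x]⁻¹ · x^{−2^k} · (xh)^{2^k}`. -/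
def dd (x y : G) (k : ℕ) (h : G) : G :=
  (itc x h (2 ^ k - 1))⁻¹ * (x ^ 2 ^ k)⁻¹ * (x * h) ^ 2 ^ k

/-- `Γ^{2^k} = ⟨g^{2^k} : g ∈ Γ⟩`. -/
def pow2Sub (G : Type*) [Group G] (k : ℕ) : Subgroup G :=
  Subgroup.closure {g | ∃ a : G, g = a ^ 2 ^ k}

/-- `ζ(h₁,h₂) = ∏_{ℓ=0}^{2^k−2} [h₁^x, x, (ℓ)…, x, h₂, x, (2^k−2−ℓ)…, x]`,
factors in order of increasing `ℓ`. -/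
def zeta (x : G) (k : ℕ) (h₁ h₂ : G) : G :=
  ((List.range (2 ^ k - 1)).map
    (fun l => itc x (pc (itc x (x⁻¹ * h₁ * x) l) h₂) (2 ^ k - 2 - l))).prod

/-!
Conjugation by `x` sends `c_i` to `c_i c_{i+1}`. Since `[c_m, c_n] ∈ Z` and `Z` is central in `H`,
the commutator is bilinear on the `c_i`, so conjugation by `x` multiplies `z_{m,n}` out as
`z_{m,n} z_{m+1,n} z_{m,n+1} z_{m+1,n+1}`, i.e. acts on the indices as `(1 + X)(1 + Y)`. As `Z` is
elementary abelian, squaring this operator gives `(1 + X²)(1 + Y²)`, so conjugation by `x^{2^k}`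
acts as `(1 + X^{2^k})(1 + Y^{2^k})`; dividing by `z_{m,n}` gives the commutator.
-/

open scoped IsMulCommutative

lemma pc_eq_inv_mul_conj (a g : G) : pc a g = a⁻¹ * (g⁻¹ * a * g) := by
  unfold pc; group

lemma conj_pc (g a b : G) : g⁻¹ * pc a b * g = pc (g⁻¹ * a * g) (g⁻¹ * b * g) := by
  unfold pc; group

lemma conj_mul_distrib (g a b : G) : g⁻¹ * (a * b) * g = (g⁻¹ * a * g) * (g⁻¹ * b * g) := by
  group

lemma pc_mul_left_of_commute {a b c : G} (h : Commute (pc a c) b) :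
    pc (a * b) c = pc a c * pc b c := by
  have hconj : b⁻¹ * pc a c * b = pc a c := by rw [mul_assoc, h.eq, inv_mul_cancel_left]
  calc pc (a * b) c = b⁻¹ * pc a c * b * pc b c := by unfold pc; group
    _ = pc a c * pc b c := by rw [hconj]

lemma pc_mul_right_of_commute {a b c : G} (h : Commute (pc a b) c)
    (h' : Commute (pc a c) (pc a b)) : pc a (b * c) = pc a b * pc a c := by
  have hconj : c⁻¹ * pc a b * c = pc a b := by rw [mul_assoc, h.eq, inv_mul_cancel_left]
  calc pc a (b * c) = pc a c * (c⁻¹ * pc a b * c) := by unfold pc; group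
    _ = pc a b * pc a c := by rw [hconj, h'.eq]

/-- The identity `(1 + X)² (1 + Y)² = (1 + X²) (1 + Y²)` in characteristic 2, read with
`z_{ij} = X^i Y^j` for `a, b, c, d, e, f, g, h, i = z₀₀, z₁₀, z₀₁, z₁₁, z₂₀, z₂₁, z₀₂, z₁₂, z₂₂`. -/
lemma mul_expand_eq_of_mul_self_eq_one {A : Type*} [CommGroup A] (hA : ∀ a : A, a * a = 1)
    (a b c d e f g h i : A) :
    a * b * c * d * (b * e * d * f) * (c * d * g * h) * (d * f * h * i) = a * e * g * i := by
  have hA' : ∀ a b : A, a * (a * b) = b := fun a b => by rw [← mul_assoc, hA, one_mul]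
  simp only [mul_comm, mul_left_comm, hA']

lemma cc_succ (x y : G) {i : ℕ} (hi : 1 ≤ i) : cc x y (i + 1) = pc (cc x y i) x := by
  obtain ⟨j, rfl⟩ := Nat.exists_eq_add_of_le' hi
  rfl

lemma conj_cc (x y : G) {i : ℕ} (hi : 1 ≤ i) :
    x⁻¹ * cc x y i * x = cc x y i * cc x y (i + 1) := by
  rw [cc_succ x y hi]; unfold pc; group

lemma cc_mem_Hsub (x y : G) {i : ℕ} (hi : 1 ≤ i) : cc x y i ∈ Hsub x y :=
  Subgroup.subset_closure ⟨i, hi, rfl⟩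

lemma zz_mem_Zsub (x y : G) {m n : ℕ} (hm : 1 ≤ m) (hn : 1 ≤ n) : zz x y m n ∈ Zsub x y :=
  Subgroup.subset_closure (Or.inr ⟨m, n, hm, hn, rfl⟩)

lemma Zsub_le_Hsub (x y : G) : Zsub x y ≤ Hsub x y := by
  rw [Zsub, Subgroup.closure_le]
  rintro g (⟨l, hl, rfl⟩ | ⟨m, n, hm, hn, rfl⟩)
  · exact pow_mem (cc_mem_Hsub x y hl) 2
  · unfold zz pc
    exact mul_mem (mul_mem (mul_mem (inv_mem (cc_mem_Hsub x y hm)) (inv_mem (cc_mem_Hsub x y hn)))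
      (cc_mem_Hsub x y hm)) (cc_mem_Hsub x y hn)

section Relations

variable {x y : G}

lemma Zsub_isMulCommutative (hca : ∀ z ∈ Zsub x y, ∀ h ∈ Hsub x y, z * h = h * z) :
    IsMulCommutative (Zsub x y) :=
  .of_setLike_mul_comm fun a ha b hb => hca a ha b (Zsub_le_Hsub x y hb)

lemma pc_cc_mul_cc (hca : ∀ z ∈ Zsub x y, ∀ h ∈ Hsub x y, z * h = h * z)
    {l m n : ℕ} (hl : 1 ≤ l) (hm : 1 ≤ m) (hn : 1 ≤ n) :
    pc (cc x y l) (cc x y m * cc x y n) = zz x y l m * zz x y l n :=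
  pc_mul_right_of_commute (hca _ (zz_mem_Zsub x y hl hm) _ (cc_mem_Hsub x y hn))
    (hca _ (zz_mem_Zsub x y hl hn) _ (Zsub_le_Hsub x y (zz_mem_Zsub x y hl hm)))

lemma conj_zz (hca : ∀ z ∈ Zsub x y, ∀ h ∈ Hsub x y, z * h = h * z)
    {m n : ℕ} (hm : 1 ≤ m) (hn : 1 ≤ n) :
    x⁻¹ * zz x y m n * x =
      zz x y m n * zz x y (m + 1) n * zz x y m (n + 1) * zz x y (m + 1) (n + 1) := by
  have hm' : 1 ≤ m + 1 := by omega
  have hn' : 1 ≤ n + 1 := by omega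
  have hcomm : Commute (pc (cc x y m) (cc x y n * cc x y (n + 1))) (cc x y (m + 1)) := by
    rw [pc_cc_mul_cc hca hm hn hn']
    exact hca _ (mul_mem (zz_mem_Zsub x y hm hn) (zz_mem_Zsub x y hm hn')) _ (cc_mem_Hsub x y hm')
  have hswap : zz x y m (n + 1) * zz x y (m + 1) n = zz x y (m + 1) n * zz x y m (n + 1) :=
    hca _ (zz_mem_Zsub x y hm hn') _ (Zsub_le_Hsub x y (zz_mem_Zsub x y hm' hn))
  calc x⁻¹ * zz x y m n * x = pc (cc x y m * cc x y (m + 1)) (cc x y n * cc x y (n + 1)) := by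
        rw [zz, conj_pc, conj_cc x y hm, conj_cc x y hn]
    _ = zz x y m n * zz x y m (n + 1) * (zz x y (m + 1) n * zz x y (m + 1) (n + 1)) := by
        rw [pc_mul_left_of_commute hcomm, pc_cc_mul_cc hca hm hn hn', pc_cc_mul_cc hca hm' hn hn']
    _ = zz x y m n * zz x y (m + 1) n * zz x y m (n + 1) * zz x y (m + 1) (n + 1) := by
        rw [mul_assoc, ← mul_assoc (zz x y m (n + 1)), hswap]
        simp only [mul_assoc]

lemma conj_two_pow_zz (hca : ∀ z ∈ Zsub x y, ∀ h ∈ Hsub x y, z * h = h * z)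
    (hz2 : ∀ z ∈ Zsub x y, z ^ 2 = 1) (k : ℕ) {m n : ℕ} (hm : 1 ≤ m) (hn : 1 ≤ n) :
    (x ^ 2 ^ k)⁻¹ * zz x y m n * x ^ 2 ^ k =
      zz x y m n * zz x y (m + 2 ^ k) n * zz x y m (n + 2 ^ k) *
        zz x y (m + 2 ^ k) (n + 2 ^ k) := by
  induction k generalizing m n with
  | zero => simpa using conj_zz hca hm hn
  | succ k ih =>
    set d := 2 ^ k
    have hd : 2 ^ (k + 1) = d + d := by rw [pow_succ]; omega
    have hm₁ : 1 ≤ m + d := Nat.le_add_right_of_le hm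
    have hn₁ : 1 ≤ n + d := Nat.le_add_right_of_le hn
    have hm₂ : 1 ≤ m + d + d := Nat.le_add_right_of_le hm₁
    have hn₂ : 1 ≤ n + d + d := Nat.le_add_right_of_le hn₁
    have hsq : ∀ a : Zsub x y, a * a = 1 := fun a =>
      Subtype.ext (by simpa [pow_two] using hz2 a a.2)
    have := Zsub_isMulCommutative hca
    have hconj_twice : ∀ z : G, (x ^ 2 ^ (k + 1))⁻¹ * z * x ^ 2 ^ (k + 1) =
        (x ^ d)⁻¹ * ((x ^ d)⁻¹ * z * x ^ d) * x ^ d := by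
      intro z; rw [hd, pow_add]; group
    rw [hconj_twice, ih hm hn, conj_mul_distrib, conj_mul_distrib, conj_mul_distrib, ih hm hn,
      ih hm₁ hn, ih hm hn₁, ih hm₁ hn₁, hd, ← add_assoc, ← add_assoc]
    exact congrArg Subtype.val (mul_expand_eq_of_mul_self_eq_one hsq
      ⟨_, zz_mem_Zsub x y hm hn⟩ ⟨_, zz_mem_Zsub x y hm₁ hn⟩ ⟨_, zz_mem_Zsub x y hm hn₁⟩
      ⟨_, zz_mem_Zsub x y hm₁ hn₁⟩ ⟨_, zz_mem_Zsub x y hm₂ hn⟩ ⟨_, zz_mem_Zsub x y hm₂ hn₁⟩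
      ⟨_, zz_mem_Zsub x y hm hn₂⟩ ⟨_, zz_mem_Zsub x y hm₁ hn₂⟩ ⟨_, zz_mem_Zsub x y hm₂ hn₂⟩)

end Relations

theorem lemma_p_k (x y : G)
    (hca : ∀ z ∈ Zsub x y, ∀ h ∈ Hsub x y, z * h = h * z)
    (hz2 : ∀ z ∈ Zsub x y, z ^ 2 = 1)
    (m n : ℕ) (hm : 1 ≤ m) (hn : 1 ≤ n) (k : ℕ) :
    pc (zz x y m n) (x ^ 2 ^ k) =
      zz x y (m + 2 ^ k) n * zz x y m (n + 2 ^ k) * zz x y (m + 2 ^ k) (n + 2 ^ k) := by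
  rw [pc_eq_inv_mul_conj, conj_two_pow_zz hca hz2 k hm hn]
  group

end Paper
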